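/- Let f, g : ℝ → ℝ be nonnegative, Lebesgue-integrable, measurable functions such that f(-x) = f(x) and g(-x) = g(x) for all x, f is nonincreasing on [0, ∞), g is nonincreasing on [0, ∞), and the convolution integral (f ⋆ g)(x) = ∫ f(t)·g(x - t) dt is finite for every real x. Then the convolution h = f ⋆ g satisfies h(-x) = h(x) for all x and h is nonincreasing on [0, ∞). -/

import Mathlib

open MeasureTheory Set

/-! The reflection `t ↦ -t` makes `h x = ∫ f t * g (x - t)` even. For monotonicity take
`0 ≤ x ≤ y` and reflect in the midpoint `(x + y) / 2` instead: by evenness of `g`, the integrand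
`(f t - f (x + y - t)) * (g (x - t) - g (y - t))` is `D t + D (x + y - t)` with
`D t = f t * (g (x - t) - g (y - t))`, so it integrates to `2 * (h x - h y)`. It is pointwise
nonnegative because both factors change sign exactly at the midpoint: on either side, the point
closer to the origin gives the larger value of `f` and of `g`. -/

theorem Function.Even.apply_abs {α β : Type*} [AddGroup α] [LinearOrder α] {f : α → β}
    (hf : f.Even) (a : α) : f |a| = f a := by
  rcases abs_choice a with h | h <;> rw [h]
  exact hf a

theorem AntitoneOn.apply_le_apply_of_abs_le {α β : Type*} [AddCommGroup α] [LinearOrder α]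
    [IsOrderedAddMonoid α] [Preorder β] {f : α → β} (hmono : AntitoneOn f (Ici 0))
    (heven : f.Even) {a b : α} (h : |a| ≤ |b|) : f b ≤ f a := by
  rw [← heven.apply_abs a, ← heven.apply_abs b]
  exact hmono (abs_nonneg a) (abs_nonneg b) h

theorem Function.Even.integral_mul_sub {G : Type*} [MeasurableSpace G] [AddCommGroup G]
    [MeasurableNeg G] {μ : Measure G} [μ.IsNegInvariant] {f g : G → ℝ} (hf : f.Even)
    (hg : g.Even) : Function.Even (fun x => ∫ t, f t * g (x - t) ∂μ) := by
  intro x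
  calc ∫ t, f t * g (-x - t) ∂μ = ∫ t, f (-t) * g (-x - -t) ∂μ :=
        (integral_neg_eq_self _ μ).symm
    _ = ∫ t, f t * g (x - t) ∂μ := by
        simp only [hf.eq, neg_sub_neg, ← neg_sub x, hg.eq]

section
variable {f g : ℝ → ℝ}

theorem sub_mul_sub_nonneg_of_even_of_antitoneOn (hf : f.Even) (hg : g.Even)
    (hfmono : AntitoneOn f (Ici 0)) (hgmono : AntitoneOn g (Ici 0)) {x y : ℝ} (hxy : x ≤ y)
    (hsum : 0 ≤ x + y) (t : ℝ) : 0 ≤ (f t - f (x + y - t)) * (g (x - t) - g (y - t)) := by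
  rcases le_total (t + t) (x + y) with ht | ht
  · have hf' : f (x + y - t) ≤ f t :=
      hfmono.apply_le_apply_of_abs_le hf (abs_le_abs (by linarith) (by linarith))
    have hg' : g (y - t) ≤ g (x - t) :=
      hgmono.apply_le_apply_of_abs_le hg (abs_le_abs (by linarith) (by linarith))
    exact mul_nonneg (sub_nonneg.2 hf') (sub_nonneg.2 hg')
  · have hf' : f t ≤ f (x + y - t) :=
      hfmono.apply_le_apply_of_abs_le hf (abs_le_abs (by linarith) (by linarith))
    have hg' : g (x - t) ≤ g (y - t) := hgmono.apply_le_apply_of_abs_le hg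
      ((abs_le_abs (by linarith) (by linarith) : |y - t| ≤ |t - x|).trans_eq (abs_sub_comm t x))
    exact mul_nonneg_of_nonpos_of_nonpos (sub_nonpos.2 hf') (sub_nonpos.2 hg')

theorem antitoneOn_integral_mul_sub_of_even (hf : f.Even) (hg : g.Even)
    (hfmono : AntitoneOn f (Ici 0)) (hgmono : AntitoneOn g (Ici 0))
    (hconv : ∀ x, Integrable (fun t => f t * g (x - t))) :
    AntitoneOn (fun x => ∫ t, f t * g (x - t)) (Ici 0) := by
  intro x hx y hy hxy
  let D : ℝ → ℝ := fun t => f t * (g (x - t) - g (y - t))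
  have hD : Integrable D :=
    ((hconv x).sub (hconv y)).congr (.of_forall fun t => (mul_sub _ _ _).symm)
  have hD_integral : ∫ t, D t = (∫ t, f t * g (x - t)) - ∫ t, f t * g (y - t) := by
    simpa only [D, mul_sub] using integral_sub (hconv x) (hconv y)
  have hsymm : ∀ t, (f t - f (x + y - t)) * (g (x - t) - g (y - t)) = D t + D (x + y - t) := by
    intro t
    have hx' : x - (x + y - t) = -(y - t) := by ring
    have hy' : y - (x + y - t) = -(x - t) := by ring
    simp only [D, hx', hy', hg.eq]
    ring
  have hnonneg : 0 ≤ 2 * ∫ t, D t :=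
    calc 0 ≤ ∫ t, (f t - f (x + y - t)) * (g (x - t) - g (y - t)) :=
          integral_nonneg (sub_mul_sub_nonneg_of_even_of_antitoneOn hf hg hfmono hgmono hxy
            (add_nonneg hx hy))
      _ = ∫ t, D t + D (x + y - t) := by simp only [hsymm]
      _ = 2 * ∫ t, D t := by
          rw [integral_add hD (hD.comp_sub_left _), integral_sub_left_eq_self D volume]
          ring
  simp only
  linarith

end

theorem convolution_even_unimodal
    (f g : ℝ → ℝ)
    (hfeven : ∀ x : ℝ, f (-x) = f x) (hgeven : ∀ x : ℝ, g (-x) = g x)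
    (hfmono : AntitoneOn f (Ici (0:ℝ))) (hgmono : AntitoneOn g (Ici (0:ℝ)))
    (hconv : ∀ x : ℝ, Integrable (fun t => f t * g (x - t))) :
    (∀ x : ℝ, (∫ t, f t * g (-x - t)) = ∫ t, f t * g (x - t)) ∧
    AntitoneOn (fun x : ℝ => ∫ t, f t * g (x - t)) (Ici (0:ℝ)) :=
  ⟨Function.Even.integral_mul_sub hfeven hgeven,
    antitoneOn_integral_mul_sub_of_even hfeven hgeven hfmono hgmono hconv⟩
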